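/- Suppose A has restricted isometry constant δ_{3T} < 1 and y = Ax + e with x being T-sparse with support 𝒯. Let T̂ be a set of T indices, U = T̂ ∪ G for some T-index set G, and suppose 𝒰 ⊇ T̂ with |𝒰| ≤ 3T and A_𝒰 full column rank. Then the least-squares coefficient error satisfies ‖x_𝒰 − A_𝒰† y‖ ≤ (δ_{3T}/(1−δ_{2T})) ‖x_{𝒰ᶜ}‖ + (1/√(1−δ_{2T})) ‖e‖. -/

import Mathlib

/-!
Since `A_𝒰† A_𝒰 = 1`, the error is `x_𝒰 - A_𝒰† y = -A_𝒰† (A x_{𝒰ᶜ} + e)`, and `|𝒰| ≤ 2T`, so the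
lower RIP bound `(1 - δ_{2T}) ‖w‖² ≤ ‖A_𝒰 w‖²` holds on `𝒰`. It bounds `(A_𝒰ᵀ A_𝒰)⁻¹` by
`1 / (1 - δ_{2T})`; and `A_𝒰ᵀ A x_{𝒰ᶜ}` is, after polarization, a cross term of two vectors with
disjoint supports inside `𝒰 ∪ 𝒯` (at most `3T` indices), hence of norm at most `δ_{3T} ‖x_{𝒰ᶜ}‖`.
For the noise, `A_𝒰 A_𝒰† e` is the orthogonal projection of `e` onto the range of `A_𝒰`, so it has
norm at most `‖e‖`, and the lower RIP bound turns this into `‖A_𝒰† e‖ ≤ ‖e‖ / √(1 - δ_{2T})`.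
-/

open Matrix Finset

/-- Euclidean (ℓ2) norm of a finitely-indexed real vector. -/
noncomputable def enorm2 {ι : Type*} [Fintype ι] (x : ι → ℝ) : ℝ :=
  Real.sqrt (∑ i, x i ^ 2)

/-- `x` is `T`-sparse: it has at most `T` nonzero entries. -/
def sparse {N : ℕ} (T : ℕ) (x : Fin N → ℝ) : Prop :=
  (Finset.univ.filter (fun i => x i ≠ 0)).card ≤ T

/-- Support of a vector as a finset. -/
noncomputable def fsupp {N : ℕ} (x : Fin N → ℝ) : Finset (Fin N) :=
  Finset.univ.filter (fun i => x i ≠ 0)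

/-- Restricted isometry property with constant `δ` at sparsity level `T`. -/
def RIP {M N : ℕ} (A : Matrix (Fin M) (Fin N) ℝ) (T : ℕ) (δ : ℝ) : Prop :=
  ∀ x : Fin N → ℝ, sparse T x →
    (1 - δ) * enorm2 x ^ 2 ≤ enorm2 (A.mulVec x) ^ 2 ∧
    enorm2 (A.mulVec x) ^ 2 ≤ (1 + δ) * enorm2 x ^ 2

/-- Column submatrix of `A` indexed by the finset `𝒯`. -/
def cols {M N : ℕ} (A : Matrix (Fin M) (Fin N) ℝ) (𝒯 : Finset (Fin N)) :
    Matrix (Fin M) 𝒯 ℝ := A.submatrix id (fun i => (i : Fin N))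

/-- Pseudo-inverse `(Bᵀ B)⁻¹ Bᵀ` (full column rank assumed where used). -/
noncomputable def pinv {M : ℕ} {ι : Type*} [Fintype ι] [DecidableEq ι]
    (B : Matrix (Fin M) ι ℝ) : Matrix ι (Fin M) ℝ := (Bᵀ * B)⁻¹ * Bᵀ

/-- `x` restricted to the index set `S` (zero off `S`). -/
def restr {N : ℕ} (x : Fin N → ℝ) (S : Finset (Fin N)) : Fin N → ℝ :=
  fun i => if i ∈ S then x i else 0

/-- Zero-pad a vector indexed by `S` to a full-length vector. -/
noncomputable def scatter {N : ℕ} (S : Finset (Fin N)) (v : S → ℝ) : Fin N → ℝ :=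
  fun i => if h : i ∈ S then v ⟨i, h⟩ else 0

section Euclidean

variable {ι : Type*} [Fintype ι]

lemma enorm2_eq_norm_toLp (x : ι → ℝ) : enorm2 x = ‖WithLp.toLp 2 x‖ := by
  simp [EuclideanSpace.norm_eq, enorm2]

lemma enorm2_nonneg (x : ι → ℝ) : 0 ≤ enorm2 x :=
  Real.sqrt_nonneg _

lemma enorm2_sq (x : ι → ℝ) : enorm2 x ^ 2 = x ⬝ᵥ x := by
  rw [enorm2, Real.sq_sqrt (by positivity)]
  simp [dotProduct, sq]

lemma enorm2_add_le (x y : ι → ℝ) : enorm2 (x + y) ≤ enorm2 x + enorm2 y := by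
  simpa only [enorm2_eq_norm_toLp, WithLp.toLp_add] using norm_add_le _ _

lemma enorm2_neg (x : ι → ℝ) : enorm2 (-x) = enorm2 x := by
  simp only [enorm2_eq_norm_toLp, WithLp.toLp_neg, norm_neg]

lemma enorm2_smul (c : ℝ) (x : ι → ℝ) : enorm2 (c • x) = |c| * enorm2 x := by
  simp only [enorm2_eq_norm_toLp, WithLp.toLp_smul, norm_smul, Real.norm_eq_abs]

lemma enorm2_eq_zero {x : ι → ℝ} : enorm2 x = 0 ↔ x = 0 := by
  simp [enorm2_eq_norm_toLp]

lemma dotProduct_le_enorm2_mul (x y : ι → ℝ) : x ⬝ᵥ y ≤ enorm2 x * enorm2 y := by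
  simpa [enorm2_eq_norm_toLp, EuclideanSpace.inner_toLp_toLp, dotProduct_comm]
    using real_inner_le_norm (WithLp.toLp 2 x) (WithLp.toLp 2 y)

end Euclidean

section Support

variable {N : ℕ}

lemma fsupp_scatter (S : Finset (Fin N)) (v : S → ℝ) : fsupp (scatter S v) ⊆ S := by
  intro i hi
  by_contra h
  simp [fsupp, scatter, h] at hi

lemma fsupp_restr_subset (x : Fin N → ℝ) (S : Finset (Fin N)) : fsupp (restr x S) ⊆ fsupp x := by
  intro i hi
  simp only [fsupp, mem_filter, mem_univ, true_and] at hi ⊢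
  intro hx
  simp [restr, hx] at hi

lemma fsupp_add_subset (u v : Fin N → ℝ) : fsupp (u + v) ⊆ fsupp u ∪ fsupp v := by
  intro i
  simp only [fsupp, mem_filter, mem_union, mem_univ, true_and, Pi.add_apply]
  contrapose!
  simp_all

lemma fsupp_sub_subset (u v : Fin N → ℝ) : fsupp (u - v) ⊆ fsupp u ∪ fsupp v := by
  simpa [sub_eq_add_neg, fsupp] using fsupp_add_subset u (-v)

lemma fsupp_smul_subset (c : ℝ) (u : Fin N → ℝ) : fsupp (c • u) ⊆ fsupp u := by
  intro i
  simp +contextual [fsupp]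

lemma sparse_of_fsupp_subset {T : ℕ} {z : Fin N → ℝ} {W : Finset (Fin N)}
    (h : fsupp z ⊆ W) (hW : W.card ≤ T) : sparse T z :=
  (card_le_card h).trans hW

lemma enorm2_scatter (S : Finset (Fin N)) (v : S → ℝ) : enorm2 (scatter S v) = enorm2 v := by
  rw [enorm2, enorm2, ← sum_subset (subset_univ S) (fun j _ hj => by simp [scatter, hj]),
    ← sum_attach S]
  simp [scatter]

lemma scatter_coe_eq_restr (x : Fin N → ℝ) (S : Finset (Fin N)) :
    scatter S (fun i : S => x i) = restr x S := by
  funext i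
  simp only [scatter, restr]
  split_ifs <;> rfl

lemma restr_add_restr_compl (x : Fin N → ℝ) (S : Finset (Fin N)) :
    restr x S + restr x Sᶜ = x := by
  funext i
  by_cases h : i ∈ S <;> simp [restr, h]

variable {M : ℕ} (A : Matrix (Fin M) (Fin N) ℝ)

lemma cols_mulVec (S : Finset (Fin N)) (v : S → ℝ) : cols A S *ᵥ v = A *ᵥ scatter S v := by
  funext i
  rw [mulVec, mulVec, dotProduct, dotProduct,
    ← sum_subset (subset_univ S) (fun j _ hj => by simp [scatter, hj]), ← sum_attach S]
  simp [cols, scatter]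

lemma mulVec_eq_cols_mulVec_add (x : Fin N → ℝ) (S : Finset (Fin N)) :
    A *ᵥ x = cols A S *ᵥ (fun i : S => x i) + A *ᵥ restr x Sᶜ := by
  rw [cols_mulVec, scatter_coe_eq_restr, ← mulVec_add, restr_add_restr_compl]

end Support

lemma le_of_sq_le_mul {a b : ℝ} (ha : 0 ≤ a) (hb : 0 ≤ b) (h : a ^ 2 ≤ a * b) : a ≤ b := by
  rcases ha.eq_or_lt with rfl | ha
  · exact hb
  · nlinarith

section Gram

variable {m ι : Type*} [Fintype m] [Fintype ι]

lemma enorm2_mulVec_sq_eq_dotProduct_gram (B : Matrix m ι ℝ) (u : ι → ℝ) :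
    enorm2 (B *ᵥ u) ^ 2 = u ⬝ᵥ ((Bᵀ * B) *ᵥ u) := by
  rw [enorm2_sq, ← mulVec_mulVec, dotProduct_mulVec u Bᵀ, vecMul_transpose]

variable [DecidableEq ι] {B : Matrix m ι ℝ}

lemma enorm2_inv_gram_mulVec_le (hrank : IsUnit (Bᵀ * B).det) {c : ℝ} (hc : 0 < c)
    (hB : ∀ w, c * enorm2 w ^ 2 ≤ enorm2 (B *ᵥ w) ^ 2) (z : ι → ℝ) :
    enorm2 ((Bᵀ * B)⁻¹ *ᵥ z) ≤ enorm2 z / c := by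
  set u := (Bᵀ * B)⁻¹ *ᵥ z
  have hgram : (Bᵀ * B) *ᵥ u = z := by
    rw [mulVec_mulVec, mul_nonsing_inv _ hrank, one_mulVec]
  have hu : c * enorm2 u ^ 2 ≤ enorm2 u * enorm2 z :=
    calc c * enorm2 u ^ 2 ≤ enorm2 (B *ᵥ u) ^ 2 := hB u
      _ = u ⬝ᵥ z := by rw [enorm2_mulVec_sq_eq_dotProduct_gram, hgram]
      _ ≤ enorm2 u * enorm2 z := dotProduct_le_enorm2_mul u z
  refine le_of_sq_le_mul (enorm2_nonneg u) (div_nonneg (enorm2_nonneg z) hc.le) ?_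
  rw [mul_div_assoc', le_div_iff₀ hc]
  linarith

end Gram

section PseudoInverse

variable {M : ℕ} {ι : Type*} [Fintype ι] [DecidableEq ι] {B : Matrix (Fin M) ι ℝ}

lemma pinv_mulVec_mulVec (hrank : IsUnit (Bᵀ * B).det) (v : ι → ℝ) : pinv B *ᵥ (B *ᵥ v) = v := by
  rw [pinv, mulVec_mulVec, Matrix.mul_assoc, nonsing_inv_mul _ hrank, one_mulVec]

lemma enorm2_pinv_mulVec_le (hrank : IsUnit (Bᵀ * B).det) {c : ℝ} (hc : 0 < c)
    (hB : ∀ w, c * enorm2 w ^ 2 ≤ enorm2 (B *ᵥ w) ^ 2) (r : Fin M → ℝ) :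
    enorm2 (pinv B *ᵥ r) ≤ enorm2 r / Real.sqrt c := by
  have hgram : (Bᵀ * B) *ᵥ (pinv B *ᵥ r) = Bᵀ *ᵥ r := by
    rw [pinv, mulVec_mulVec, ← Matrix.mul_assoc, mul_nonsing_inv _ hrank, Matrix.one_mul]
  set u := pinv B *ᵥ r
  have hproj : enorm2 (B *ᵥ u) ≤ enorm2 r := by
    refine le_of_sq_le_mul (enorm2_nonneg _) (enorm2_nonneg r) ?_
    calc enorm2 (B *ᵥ u) ^ 2 = (B *ᵥ u) ⬝ᵥ r := by
          rw [enorm2_mulVec_sq_eq_dotProduct_gram, hgram, dotProduct_mulVec, vecMul_transpose]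
      _ ≤ enorm2 (B *ᵥ u) * enorm2 r := dotProduct_le_enorm2_mul _ _
  have hu : enorm2 u ^ 2 ≤ (enorm2 r / Real.sqrt c) ^ 2 := by
    rw [div_pow, Real.sq_sqrt hc.le, le_div_iff₀ hc, mul_comm]
    nlinarith [hB u, enorm2_nonneg (B *ᵥ u)]
  exact le_of_sq_le_sq hu (div_nonneg (enorm2_nonneg r) (Real.sqrt_nonneg c))

end PseudoInverse

namespace RIP

variable {M N s : ℕ} {A : Matrix (Fin M) (Fin N) ℝ} {δ : ℝ}

lemma lower_cols (h : RIP A s δ) {S : Finset (Fin N)} (hS : S.card ≤ s) (w : S → ℝ) :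
    (1 - δ) * enorm2 w ^ 2 ≤ enorm2 (cols A S *ᵥ w) ^ 2 := by
  rw [cols_mulVec, ← enorm2_scatter S w]
  exact (h _ (sparse_of_fsupp_subset (fsupp_scatter S w) hS)).1

section Disjoint

variable (h : RIP A s δ) {u v : Fin N → ℝ} (hdisj : ∀ i, u i = 0 ∨ v i = 0)
  {W : Finset (Fin N)} (hu : fsupp u ⊆ W) (hv : fsupp v ⊆ W) (hW : W.card ≤ s)
include h hdisj hu hv hW

/-- Polarization: `4 (Au)·(Av) = ‖A(u+v)‖² - ‖A(u-v)‖²`, and `u ± v` both have norm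
`‖u‖² + ‖v‖²` since `u ⊥ v`. -/
lemma dotProduct_mulVec_le_half :
    (A *ᵥ u) ⬝ᵥ (A *ᵥ v) ≤ δ * (enorm2 u ^ 2 + enorm2 v ^ 2) / 2 := by
  have horth : u ⬝ᵥ v = 0 := sum_eq_zero fun i _ => by rcases hdisj i with h | h <;> simp [h]
  have hplus : enorm2 (u + v) ^ 2 = enorm2 u ^ 2 + enorm2 v ^ 2 := by
    simp only [enorm2_sq, add_dotProduct, dotProduct_add, dotProduct_comm v u, horth]
    ring
  have hminus : enorm2 (u - v) ^ 2 = enorm2 u ^ 2 + enorm2 v ^ 2 := by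
    simp only [enorm2_sq, sub_dotProduct, dotProduct_sub, dotProduct_comm v u, horth]
    ring
  have hpol : enorm2 (A *ᵥ (u + v)) ^ 2 - enorm2 (A *ᵥ (u - v)) ^ 2
      = 4 * ((A *ᵥ u) ⬝ᵥ (A *ᵥ v)) := by
    simp only [enorm2_sq, mulVec_add, mulVec_sub, add_dotProduct, dotProduct_add,
      sub_dotProduct, dotProduct_sub, dotProduct_comm (A *ᵥ v)]
    ring
  have hsupp := union_subset hu hv
  have hupper := (h _ (sparse_of_fsupp_subset ((fsupp_add_subset u v).trans hsupp) hW)).2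
  have hlower := (h _ (sparse_of_fsupp_subset ((fsupp_sub_subset u v).trans hsupp) hW)).1
  rw [hplus] at hupper
  rw [hminus] at hlower
  linarith

lemma dotProduct_mulVec_le : (A *ᵥ u) ⬝ᵥ (A *ᵥ v) ≤ δ * enorm2 u * enorm2 v := by
  rcases (enorm2_nonneg u).eq_or_lt with ha | ha
  · rw [← ha]
    simp [enorm2_eq_zero.1 ha.symm]
  rcases (enorm2_nonneg v).eq_or_lt with hb | hb
  · rw [← hb]
    simp [enorm2_eq_zero.1 hb.symm]
  -- Equalize the two norms: apply the half-sum bound to `‖v‖ • u` and `‖u‖ • v`.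
  have hscaled := dotProduct_mulVec_le_half h (u := enorm2 v • u) (v := enorm2 u • v)
    (fun i => (hdisj i).imp (by simp +contextual) (by simp +contextual))
    ((fsupp_smul_subset _ u).trans hu) ((fsupp_smul_subset _ v).trans hv) hW
  simp only [mulVec_smul, smul_dotProduct, dotProduct_smul, smul_eq_mul, enorm2_smul,
    abs_of_pos ha, abs_of_pos hb] at hscaled
  have hab : 0 < enorm2 u * enorm2 v := mul_pos ha hb
  nlinarith

end Disjoint

lemma enorm2_transpose_cols_mulVec_le (h : RIP A s δ) (hδ : 0 ≤ δ) {S : Finset (Fin N)}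
    {v : Fin N → ℝ} (hv : ∀ i ∈ S, v i = 0) (hcard : (S ∪ fsupp v).card ≤ s) :
    enorm2 ((cols A S)ᵀ *ᵥ (A *ᵥ v)) ≤ δ * enorm2 v := by
  set w := (cols A S)ᵀ *ᵥ (A *ᵥ v)
  have hdisj : ∀ i, scatter S w i = 0 ∨ v i = 0 := fun i => by
    by_cases hi : i ∈ S
    · exact .inr (hv i hi)
    · exact .inl (by simp [scatter, hi])
  refine le_of_sq_le_mul (enorm2_nonneg w) (mul_nonneg hδ (enorm2_nonneg v)) ?_
  calc enorm2 w ^ 2 = (A *ᵥ scatter S w) ⬝ᵥ (A *ᵥ v) := by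
        rw [enorm2_sq, ← cols_mulVec, dotProduct_mulVec, vecMul_transpose]
    _ ≤ δ * enorm2 (scatter S w) * enorm2 v :=
        dotProduct_mulVec_le h hdisj ((fsupp_scatter S w).trans subset_union_left)
          subset_union_right hcard
    _ = enorm2 w * (δ * enorm2 v) := by rw [enorm2_scatter]; ring

end RIP

theorem stmt13_general {M N T : ℕ} (A : Matrix (Fin M) (Fin N) ℝ) (δ₂ δ₃ : ℝ)
    (hδ0 : 0 ≤ δ₂) (hδ23 : δ₂ ≤ δ₃) (hδ1 : δ₃ < 1)
    (hRIP2 : RIP A (2 * T) δ₂) (hRIP3 : RIP A (3 * T) δ₃)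
    (x : Fin N → ℝ) (e y : Fin M → ℝ) (𝒯 That 𝒰 : Finset (Fin N))
    (hsupp : fsupp x ⊆ 𝒯) (h𝒯 : 𝒯.card ≤ T)
    (hThatcard : That.card = T)
    (hG : ∃ G : Finset (Fin N), G.card = T ∧ 𝒰 = That ∪ G)
    (hrank : IsUnit ((cols A 𝒰)ᵀ * cols A 𝒰).det)
    (hy : y = A.mulVec x + e) :
    enorm2 ((fun i : 𝒰 => x i) - (pinv (cols A 𝒰)).mulVec y) ≤
      (δ₃ / (1 - δ₂)) * enorm2 (restr x 𝒰ᶜ) +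
      (1 / Real.sqrt (1 - δ₂)) * enorm2 e := by
  have hc : 0 < 1 - δ₂ := by linarith
  have h𝒰 : 𝒰.card ≤ 2 * T := by
    obtain ⟨G, hGcard, rfl⟩ := hG
    exact (card_union_le _ _).trans (by omega)
  set B := cols A 𝒰
  set xc := restr x 𝒰ᶜ
  have hlower := hRIP2.lower_cols h𝒰
  have hoff : enorm2 (Bᵀ *ᵥ (A *ᵥ xc)) ≤ δ₃ * enorm2 xc := by
    refine hRIP3.enorm2_transpose_cols_mulVec_le (hδ0.trans hδ23)
      (fun i hi => by simp [xc, restr, hi]) ?_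
    have hxc : fsupp xc ⊆ 𝒯 := (fsupp_restr_subset x _).trans hsupp
    exact (card_le_card (union_subset_union_right hxc)).trans
      ((card_union_le _ _).trans (by omega))
  have herr : (fun i : 𝒰 => x i) - pinv B *ᵥ y
      = -((Bᵀ * B)⁻¹ *ᵥ (Bᵀ *ᵥ (A *ᵥ xc)) + pinv B *ᵥ e) := by
    rw [hy, mulVec_eq_cols_mulVec_add A x 𝒰, add_assoc, mulVec_add, pinv_mulVec_mulVec hrank,
      mulVec_add, pinv, ← mulVec_mulVec]
    abel
  calc _ ≤ enorm2 ((Bᵀ * B)⁻¹ *ᵥ (Bᵀ *ᵥ (A *ᵥ xc))) + enorm2 (pinv B *ᵥ e) := by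
        rw [herr, enorm2_neg]
        exact enorm2_add_le _ _
    _ ≤ δ₃ * enorm2 xc / (1 - δ₂) + enorm2 e / Real.sqrt (1 - δ₂) := by
        gcongr
        · exact (enorm2_inv_gram_mulVec_le hrank hc hlower _).trans (by gcongr)
        · exact enorm2_pinv_mulVec_le hrank hc hlower e
    _ = _ := by ring

theorem stmt13 {M N T : ℕ} (A : Matrix (Fin M) (Fin N) ℝ) (δ₂ δ₃ : ℝ)
    (hδ0 : 0 ≤ δ₂) (hδ23 : δ₂ ≤ δ₃) (hδ1 : δ₃ < 1)
    (hRIP2 : RIP A (2 * T) δ₂) (hRIP3 : RIP A (3 * T) δ₃)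
    (x : Fin N → ℝ) (e y : Fin M → ℝ) (𝒯 That 𝒰 : Finset (Fin N))
    (hsupp : fsupp x ⊆ 𝒯) (h𝒯 : 𝒯.card ≤ T)
    (hThatcard : That.card = T)
    (hG : ∃ G : Finset (Fin N), G.card = T ∧ 𝒰 = That ∪ G)
    (hThat𝒰 : That ⊆ 𝒰) (h𝒰 : 𝒰.card ≤ 3 * T)
    (hrank : IsUnit ((cols A 𝒰)ᵀ * cols A 𝒰).det)
    (hy : y = A.mulVec x + e) :
    enorm2 ((fun i : 𝒰 => x i) - (pinv (cols A 𝒰)).mulVec y) ≤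
      (δ₃ / (1 - δ₂)) * enorm2 (restr x 𝒰ᶜ) +
      (1 / Real.sqrt (1 - δ₂)) * enorm2 e :=
  stmt13_general A δ₂ δ₃ hδ0 hδ23 hδ1 hRIP2 hRIP3 x e y 𝒯 That 𝒰 hsupp h𝒯 hThatcard hG hrank hy
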